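/- arXiv:1006.0621 — 2 statements merged into one kernel-verified Lean document; each statement's English description precedes it below -/
import Mathlib

section
/- The generalized Multiple-try Metropolis algorithm on a finite state space satisfies detailed balance: for the chain whose transition mechanism draws k i.i.d. trials y_1,…,y_k from T(x,·), selects y = y_j with probability w*(y_j,x)/∑_h w*(y_h,x), draws x*_1,…,x*_{k-1} i.i.d. from T(y,·), sets x*_k = x, defines p_x = w*(x,y)/∑_h w*(x*_h,y), and accepts with probability min{1, (π(y)T(y,x)p_x)/(π(x)T(x,y)p_y)}, the resulting transition kernel P satisfies π(x)P(x,y) = π(y)P(y,x) for all x ≠ y. -/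
lemma gmtm_aux (A B : ℝ) (hA : 0 < A) (hB : 0 < B) :
    A * min 1 (B / A) = B * min 1 (A / B) := by
  rw [mul_min_of_nonneg _ _ hA.le, mul_min_of_nonneg _ _ hB.le,
    mul_one, mul_one, mul_div_cancel₀ _ hA.ne', mul_div_cancel₀ _ hB.ne', min_comm]

/-- Detailed balance for the generalized Multiple-try Metropolis algorithm
on a finite state space, with `k = m + 1 ≥ 1` trials.  By exchangeability of
the trials, the transition kernel `P x y` (for `x ≠ y`) is `(m+1)` times the
sum over the auxiliary draws `a` (the other `m` forward trials from `T x ·`)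
and `b` (the `m` reverse draws from `T y ·`, the last reverse point being `x`)
of the probability of drawing them, selecting `y`, and accepting the move. -/
theorem gmtm_detailed_balance
    {S : Type*} [Fintype S] (π : S → ℝ) (T : S → S → ℝ) (w : S → S → ℝ)
    (hπ : ∀ x, 0 < π x) (hT : ∀ x y, 0 < T x y) (hw : ∀ y x, 0 < w y x)
    (hTrow : ∀ x, ∑ y, T x y = 1)
    (m : ℕ) (P : S → S → ℝ)
    (hP : ∀ x y, x ≠ y →
      P x y = (m + 1 : ℝ) *
        ∑ a : Fin m → S, ∑ b : Fin m → S,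
          (∏ i, T x (a i)) * (∏ i, T y (b i)) * T x y *
          (w y x / (w y x + ∑ i, w (a i) x)) *
          min 1 ((π y * T y x * (w x y / (w x y + ∑ i, w (b i) y))) /
                 (π x * T x y * (w y x / (w y x + ∑ i, w (a i) x))))) :
    ∀ x y, x ≠ y → π x * P x y = π y * P y x := by
  intro x y hxy
  rw [hP x y hxy, hP y x hxy.symm]
  rw [show ∀ c d : ℝ, π x * ((m + 1 : ℝ) * c) = π y * ((m + 1 : ℝ) * d) ↔
      (m + 1 : ℝ) * (π x * c) = (m + 1 : ℝ) * (π y * d) from fun c d => by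
        constructor <;> intro h <;> linarith]
  congr 1
  simp only [Finset.mul_sum]
  conv_rhs => rw [Finset.sum_comm]
  refine Finset.sum_congr rfl fun a _ => ?_
  refine Finset.sum_congr rfl fun b _ => ?_
  have hwsa : 0 < w y x + ∑ i, w (a i) x :=
    add_pos_of_pos_of_nonneg (hw y x)
      (Finset.sum_nonneg fun i _ => (hw (a i) x).le)
  have hwsb : 0 < w x y + ∑ i, w (b i) y :=
    add_pos_of_pos_of_nonneg (hw x y)
      (Finset.sum_nonneg fun i _ => (hw (b i) y).le)
  have hA : 0 < π x * T x y * (w y x / (w y x + ∑ i, w (a i) x)) :=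
    mul_pos (mul_pos (hπ x) (hT x y)) (div_pos (hw y x) hwsa)
  have hB : 0 < π y * T y x * (w x y / (w x y + ∑ i, w (b i) y)) :=
    mul_pos (mul_pos (hπ y) (hT y x)) (div_pos (hw x y) hwsb)
  have key := gmtm_aux _ _ hA hB
  linear_combination ((∏ i, T x (a i)) * (∏ i, T y (b i))) * key
end

section
/- The Generalized Multiple-try Reversible Jump (GMTRJ) algorithm on a finite state space satisfies the detailed balance condition π(θ)P(θ,θ') = π(θ')P(θ',θ)·|J(θ,θ')| for all θ ≠ θ', where P is the transition kernel that proposes k candidate parameter values θ_{a_1},…,θ_{a_k} from proposal densities T(θ,·), selects θ_{a_j} with probability w*(θ_{a_j},θ)/∑_h w*(θ_{a_h},θ), draws reverse candidates θ_{b_1},…,θ_{b_{k-1}} from T(θ_{a_j},·) with θ_{b_k} = θ, and accepts with probability min{1, (π(θ_{a_j})T(θ_{a_j},θ)p_θ)/(π(θ)T(θ,θ_{a_j})p_{θ_{a_j}})·|J(θ,θ_{a_j})|}. -/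
lemma gmtrj_key (A B Jv : ℝ) (hA : 0 < A) (hB : 0 < B) (hJv : 0 < Jv) :
    A * min 1 (B / A * Jv) = B * min 1 (A / B * (1 / Jv)) * Jv := by
  have h1 : A * min 1 (B / A * Jv) = min A (B * Jv) := by
    rw [mul_min_of_nonneg _ _ hA.le, mul_one]
    congr 1
    field_simp
  have h2 : B * min 1 (A / B * (1 / Jv)) * Jv = min (B * Jv) A := by
    rw [mul_min_of_nonneg _ _ hB.le, mul_one, min_mul_of_nonneg _ _ hJv.le]
    congr 1
    field_simp
  rw [h1, h2, min_comm]


/-- Detailed balance for the Generalized Multiple-try Reversible Jump (GMTRJ)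
algorithm on a finite state space, with `k = m + 1 ≥ 1` trials and Jacobian
factor `J` satisfying `J θ' θ = 1 / J θ θ'`.  The kernel `P θ θ'` (for
`θ ≠ θ'`) is `(m+1)` times the sum over the auxiliary draws `a` (the other `m`
forward trials from `T θ ·`) and `b` (the `m` reverse trials from `T θ' ·`,
the last reverse point being `θ`) of the probability of drawing them,
selecting `θ'`, and accepting.  Detailed balance reads
`π θ * P θ θ' = π θ' * P θ' θ * J θ θ'`. -/
theorem gmtrj_detailed_balance
    {S : Type*} [Fintype S] (π : S → ℝ) (T : S → S → ℝ) (w : S → S → ℝ)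
    (J : S → S → ℝ)
    (hπ : ∀ x, 0 < π x) (hT : ∀ x y, 0 < T x y) (hw : ∀ y x, 0 < w y x)
    (hJ : ∀ x y, 0 < J x y) (hJinv : ∀ x y, J y x = 1 / J x y)
    (m : ℕ) (P : S → S → ℝ)
    (hP : ∀ x y, x ≠ y →
      P x y = (m + 1 : ℝ) *
        ∑ a : Fin m → S, ∑ b : Fin m → S,
          (∏ i, T x (a i)) * (∏ i, T y (b i)) * T x y *
          (w y x / (w y x + ∑ i, w (a i) x)) *
          min 1 ((π y * T y x * (w x y / (w x y + ∑ i, w (b i) y))) /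
                 (π x * T x y * (w y x / (w y x + ∑ i, w (a i) x))) *
                 J x y)) :
    ∀ x y, x ≠ y → π x * P x y = π y * P y x * J x y := by
  intro x y hxy
  have hDx : ∀ a : Fin m → S, 0 < w y x + ∑ i, w (a i) x := by
    intro a
    have : (0:ℝ) ≤ ∑ i, w (a i) x := Finset.sum_nonneg fun i _ => (hw _ _).le
    linarith [hw y x]
  have hDy : ∀ b : Fin m → S, 0 < w x y + ∑ i, w (b i) y := by
    intro b
    have : (0:ℝ) ≤ ∑ i, w (b i) y := Finset.sum_nonneg fun i _ => (hw _ _).le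
    linarith [hw x y]
  rw [hP x y hxy, hP y x hxy.symm, hJinv x y]
  simp only [Finset.mul_sum, Finset.sum_mul]
  rw [Finset.sum_comm]
  refine Finset.sum_congr rfl fun u _ => Finset.sum_congr rfl fun v _ => ?_
  have hA : 0 < π x * T x y * (w y x / (w y x + ∑ i, w (v i) x)) :=
    mul_pos (mul_pos (hπ x) (hT x y)) (div_pos (hw y x) (hDx v))
  have hB : 0 < π y * T y x * (w x y / (w x y + ∑ i, w (u i) y)) :=
    mul_pos (mul_pos (hπ y) (hT y x)) (div_pos (hw x y) (hDy u))
  have key := gmtrj_key _ _ (J x y) hA hB (hJ x y)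
  linear_combination ((m : ℝ) + 1) * (∏ i, T x (v i)) * (∏ i, T y (u i)) * key
end
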